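/- Under the setup, suppose D₁ ≥ D₀ almost surely, for all d, z ∈ {0,1} the pair (Z, W) is conditionally independent of Y_{d,z} given (D₁, D₀), Z is conditionally independent of (D₁, D₀) given W, P(Z = z, W = 1) > 0 for z ∈ {0,1}, P(NT) > 0, P(CP) > 0, P(CP | W = 1) > 0, and E[Y_{0,1} − Y_{0,0} | NT] = ρ₀. Then E[Y_{0,0} | CP] = −(r₀(1) − ρ₀·P(NT | W = 1)) / P(CP | W = 1), where r₀(1) = E[Y·(1−D) | Z = 1, W = 1] − E[Y·(1−D) | Z = 0, W = 1]. -/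

import Mathlib

open MeasureTheory ProbabilityTheory

/-- `pr μ A` is the probability of the event `A`, as a real number. -/
noncomputable def pr {Ω : Type*} [MeasurableSpace Ω] (μ : Measure Ω) (A : Set Ω) : ℝ :=
  (μ A).toReal

/-- `prCond μ A B` is the conditional probability `P(A | B) = P(A ∩ B) / P(B)`. -/
noncomputable def prCond {Ω : Type*} [MeasurableSpace Ω] (μ : Measure Ω) (A B : Set Ω) : ℝ :=
  pr μ (A ∩ B) / pr μ B

/-- `cexp μ A f` is the conditional expectation `E[f | A]` of `f` given the event `A`. -/
noncomputable def cexp {Ω : Type*} [MeasurableSpace Ω] (μ : Measure Ω) (A : Set Ω)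
    (f : Ω → ℝ) : ℝ :=
  ∫ ω, f ω ∂(μ[|A])

/-- The event `{ω | f ω = c}`. -/
def evEq {Ω : Type*} (f : Ω → ℝ) (c : ℝ) : Set Ω := {ω | f ω = c}

/-- Always takers: `D₁ = D₀ = 1`. -/
def ATset {Ω : Type*} (D1 D0 : Ω → ℝ) : Set Ω := {ω | D1 ω = 1 ∧ D0 ω = 1}

/-- Never takers: `D₁ = D₀ = 0`. -/
def NTset {Ω : Type*} (D1 D0 : Ω → ℝ) : Set Ω := {ω | D1 ω = 0 ∧ D0 ω = 0}

/-- Compliers: `D₁ = 1`, `D₀ = 0`. -/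
def CPset {Ω : Type*} (D1 D0 : Ω → ℝ) : Set Ω := {ω | D1 ω = 1 ∧ D0 ω = 0}

/-!
Among units with `W = 1`, those untreated at `Z = 1` are exactly the never takers (by
monotonicity), and those untreated at `Z = 0` are the never takers and the compliers. Within a
stratum `G = {D₁ = i, D₀ = j}`, CI1 makes `Y_{d,z}` independent of the instrument cell
`S = {Z = z, W = 1}`, and CI2 makes `P(G | S) = P(G | W = 1)`; hence `E[1_G Y_{d,z} | S] =
P(G | W = 1) E[Y_{d,z} | G]`. So `E[Y(1-D) | Z = 1, W = 1] = P(NT | W = 1) E[Y₀₁ | NT]` and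
`E[Y(1-D) | Z = 0, W = 1] = P(NT | W = 1) E[Y₀₀ | NT] + P(CP | W = 1) E[Y₀₀ | CP]`; subtracting
and solving for `E[Y₀₀ | CP]` gives the formula.
-/

section General

variable {Ω : Type*} [MeasurableSpace Ω] {μ : Measure Ω}

lemma cexp_eq_inv_mul_setIntegral (A : Set Ω) (f : Ω → ℝ) :
    cexp μ A f = (μ.real A)⁻¹ * ∫ ω in A, f ω ∂μ := by
  rw [cexp, ProbabilityTheory.cond, integral_smul_measure, ENNReal.toReal_inv, smul_eq_mul,
    measureReal_def]

lemma cexp_congr_ae {A : Set Ω} (hA : MeasurableSet A) {f g : Ω → ℝ}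
    (h : ∀ᵐ ω ∂μ, ω ∈ A → f ω = g ω) : cexp μ A f = cexp μ A g := by
  simp only [cexp_eq_inv_mul_setIntegral, setIntegral_congr_ae hA h]

lemma cexp_add (A : Set Ω) {f g : Ω → ℝ} (hf : Integrable f μ) (hg : Integrable g μ) :
    cexp μ A (fun ω => f ω + g ω) = cexp μ A f + cexp μ A g := by
  simp only [cexp_eq_inv_mul_setIntegral, integral_add hf.integrableOn hg.integrableOn, mul_add]

lemma cexp_sub (A : Set Ω) {f g : Ω → ℝ} (hf : Integrable f μ) (hg : Integrable g μ) :
    cexp μ A (fun ω => f ω - g ω) = cexp μ A f - cexp μ A g := by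
  simp only [cexp_eq_inv_mul_setIntegral, integral_sub hf.integrableOn hg.integrableOn, mul_sub]

lemma setIntegral_inter_eq_measureReal_mul_cexp [IsFiniteMeasure μ] {α : Type*}
    [MeasurableSpace α] {X : Ω → α} {T : Set α} {G : Set Ω} {f : Ω → ℝ}
    (hX : Measurable X) (hT : MeasurableSet T) (hf : AEMeasurable f μ)
    (hind : IndepFun X f (μ[|G])) :
    ∫ ω in X ⁻¹' T ∩ G, f ω ∂μ = μ.real (X ⁻¹' T ∩ G) * cexp μ G f := by
  by_cases hG0 : μ G = 0
  · have hnull : μ (X ⁻¹' T ∩ G) = 0 := measure_mono_null Set.inter_subset_right hG0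
    simp [Measure.restrict_eq_zero.2 hnull, measureReal_def, hnull]
  have hcond : ∫ ω in X ⁻¹' T, f ω ∂(μ[|G]) = (μ[|G]).real (X ⁻¹' T) * cexp μ G f :=
    ((IndepFun_iff_Indep _ _ _).1 hind).setIntegral_eq_mul (f := id) hX.comap_le
      (hf.mono_ac cond_absolutelyContinuous) ⟨T, hT, rfl⟩ aestronglyMeasurable_id
  have hG' : μ.real G ≠ 0 := (measureReal_ne_zero_iff (measure_ne_top μ G)).2 hG0
  rw [ProbabilityTheory.cond, Measure.restrict_smul, integral_smul_measure,
    Measure.restrict_restrict (hX hT), measureReal_ennreal_smul_apply,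
    measureReal_restrict_apply (hX hT), smul_eq_mul, mul_assoc] at hcond
  refine mul_left_cancel₀ ?_ hcond
  simpa [ENNReal.toReal_inv, measureReal_def] using hG'

lemma measureReal_inter_inter_eq_mul_prCond [IsFiniteMeasure μ] {A B C : Set Ω}
    (hC : MeasurableSet C) (hind : (μ[|C]) (A ∩ B) = (μ[|C]) A * (μ[|C]) B) :
    μ.real (A ∩ C ∩ B) = μ.real (A ∩ C) * prCond μ B C := by
  by_cases hC0 : μ C = 0
  · have hAC : μ (A ∩ C) = 0 := measure_mono_null Set.inter_subset_right hC0
    have hACB : μ (A ∩ C ∩ B) = 0 := measure_mono_null Set.inter_subset_left hAC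
    simp [measureReal_def, hAC, hACB]
  have hC' : μ.real C ≠ 0 := (measureReal_ne_zero_iff (measure_ne_top μ C)).2 hC0
  have h := congrArg ENNReal.toReal hind
  simp only [cond_apply hC, ENNReal.toReal_mul, ENNReal.toReal_inv, ← measureReal_def] at h
  rw [prCond, pr, pr, ← measureReal_def, ← measureReal_def]
  field_simp at h ⊢
  calc μ.real C * μ.real (A ∩ C ∩ B) = μ.real C * μ.real (C ∩ (A ∩ B)) := by
        rw [Set.inter_right_comm, Set.inter_comm]
    _ = μ.real (A ∩ C) * μ.real (B ∩ C) := by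
        rw [h, Set.inter_comm C, Set.inter_comm C]

lemma cexp_inter_indicator_eq_prCond_mul [IsFiniteMeasure μ] {α : Type*} [MeasurableSpace α]
    {X : Ω → α} {T : Set α} {A C G : Set Ω} {f : Ω → ℝ} (hX : Measurable X)
    (hT : MeasurableSet T) (hXT : X ⁻¹' T = A ∩ C) (hC : MeasurableSet C)
    (hG : MeasurableSet G) (hf : AEMeasurable f μ) (hfX : IndepFun X f (μ[|G]))
    (hAG : (μ[|C]) (A ∩ G) = (μ[|C]) A * (μ[|C]) G) (hAC : μ (A ∩ C) ≠ 0) :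
    cexp μ (A ∩ C) (G.indicator f) = prCond μ G C * cexp μ G f := by
  have hAC' : μ.real (A ∩ C) ≠ 0 := (measureReal_ne_zero_iff (measure_ne_top μ _)).2 hAC
  rw [cexp_eq_inv_mul_setIntegral, setIntegral_indicator hG, ← hXT,
    setIntegral_inter_eq_measureReal_mul_cexp hX hT hf hfX, hXT,
    measureReal_inter_inter_eq_mul_prCond hC hAG]
  field_simp

end General

section Outcomes

variable {Ω : Type*} {Y : Fin 2 → Fin 2 → Ω → ℝ} {D1 D0 Z D Yo : Ω → ℝ} {ω : Ω}

lemma untreated_outcome_of_instrument_eq_one (hD1v : D1 ω = 0 ∨ D1 ω = 1)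
    (hD0v : D0 ω = 0 ∨ D0 ω = 1) (hmono : D0 ω ≤ D1 ω) (hz : Z ω = 1)
    (hD : D ω = D1 ω * Z ω + D0 ω * (1 - Z ω))
    (hYo : Yo ω = (Y 1 1 ω * Z ω + Y 1 0 ω * (1 - Z ω)) * D ω
      + (Y 0 1 ω * Z ω + Y 0 0 ω * (1 - Z ω)) * (1 - D ω)) :
    Yo ω * (1 - D ω) = (NTset D1 D0).indicator (Y 0 1) ω := by
  rcases hD1v with h1 | h1
  · have h0 : D0 ω = 0 := by rcases hD0v with h0 | h0 <;> linarith
    simp [NTset, hYo, hD, hz, h1, h0]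
  · simp [NTset, hYo, hD, hz, h1]

lemma untreated_outcome_of_instrument_eq_zero (hD1v : D1 ω = 0 ∨ D1 ω = 1)
    (hD0v : D0 ω = 0 ∨ D0 ω = 1) (hz : Z ω = 0)
    (hD : D ω = D1 ω * Z ω + D0 ω * (1 - Z ω))
    (hYo : Yo ω = (Y 1 1 ω * Z ω + Y 1 0 ω * (1 - Z ω)) * D ω
      + (Y 0 1 ω * Z ω + Y 0 0 ω * (1 - Z ω)) * (1 - D ω)) :
    Yo ω * (1 - D ω)
      = (NTset D1 D0).indicator (Y 0 0) ω + (CPset D1 D0).indicator (Y 0 0) ω := by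
  rcases hD1v with h1 | h1 <;> rcases hD0v with h0 | h0 <;>
    simp [NTset, CPset, hYo, hD, hz, h1, h0]

end Outcomes

lemma measurableSet_stratum {Ω : Type*} [MeasurableSpace Ω] {D1 D0 : Ω → ℝ}
    (hD1m : Measurable D1) (hD0m : Measurable D0) (i j : ℝ) :
    MeasurableSet {ω | D1 ω = i ∧ D0 ω = j} :=
  (hD1m (measurableSet_singleton i)).inter (hD0m (measurableSet_singleton j))

lemma cexp_indicator_stratum_eq_prCond_mul {Ω : Type*} [MeasurableSpace Ω] {μ : Measure Ω}
    [IsFiniteMeasure μ] {D1 D0 Z W f : Ω → ℝ} {i j z w : ℝ} (hD1m : Measurable D1)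
    (hD0m : Measurable D0) (hZm : Measurable Z) (hWm : Measurable W) (hf : AEMeasurable f μ)
    (hCI1 : IndepFun (fun ω => (Z ω, W ω)) f (μ[|{ω | D1 ω = i ∧ D0 ω = j}]))
    (hCI2 : IndepFun Z (fun ω => (D1 ω, D0 ω)) (μ[|evEq W w]))
    (hS : μ (evEq Z z ∩ evEq W w) ≠ 0) :
    cexp μ (evEq Z z ∩ evEq W w) ({ω | D1 ω = i ∧ D0 ω = j}.indicator f)
      = prCond μ {ω | D1 ω = i ∧ D0 ω = j} (evEq W w) * cexp μ {ω | D1 ω = i ∧ D0 ω = j} f := by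
  have hij : {ω | D1 ω = i ∧ D0 ω = j} = (fun ω => (D1 ω, D0 ω)) ⁻¹' {(i, j)} := by
    ext; simp
  refine cexp_inter_indicator_eq_prCond_mul (hZm.prodMk hWm) (measurableSet_singleton (z, w))
    (by ext; simp [evEq]) (hWm (measurableSet_singleton w))
    (measurableSet_stratum hD1m hD0m i j) hf hCI1 ?_ hS
  rw [hij]
  exact hCI2.measure_inter_preimage_eq_mul _ _ (measurableSet_singleton z)
    (measurableSet_singleton _)

theorem EY00_CP_identified_general
    {Ω : Type*} [MeasurableSpace Ω] (μ : Measure Ω) [IsProbabilityMeasure μ]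
    (Y : Fin 2 → Fin 2 → Ω → ℝ) (D1 D0 Z W : Ω → ℝ)
    (hYint : ∀ d z, Integrable (Y d z) μ)
    (hD1v : ∀ ω, D1 ω = 0 ∨ D1 ω = 1) (hD0v : ∀ ω, D0 ω = 0 ∨ D0 ω = 1)
    (hD1m : Measurable D1) (hD0m : Measurable D0) (hZm : Measurable Z) (hWm : Measurable W)
    (D : Ω → ℝ) (hD : ∀ ω, D ω = D1 ω * Z ω + D0 ω * (1 - Z ω))
    (Yo : Ω → ℝ)
    (hYo : ∀ ω, Yo ω = (Y 1 1 ω * Z ω + Y 1 0 ω * (1 - Z ω)) * D ω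
      + (Y 0 1 ω * Z ω + Y 0 0 ω * (1 - Z ω)) * (1 - D ω))
    (hmono : ∀ᵐ ω ∂μ, D0 ω ≤ D1 ω)
    (hCI1 : ∀ (d z : Fin 2) (i j : ℝ),
      IndepFun (fun ω => (Z ω, W ω)) (Y d z) (μ[|{ω | D1 ω = i ∧ D0 ω = j}]))
    (hCI2 : ∀ w' : ℝ, IndepFun Z (fun ω => (D1 ω, D0 ω)) (μ[|evEq W w']))
    (hpos : ∀ z : ℝ, z = 0 ∨ z = 1 → 0 < pr μ (evEq Z z ∩ evEq W 1))
    (hCPW : 0 < prCond μ (CPset D1 D0) (evEq W 1))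
    (ρ0 : ℝ) (hρ0 : cexp μ (NTset D1 D0) (fun ω => Y 0 1 ω - Y 0 0 ω) = ρ0)
    (r01 : ℝ)
    (hr01 : r01 = cexp μ (evEq Z 1 ∩ evEq W 1) (fun ω => Yo ω * (1 - D ω))
      - cexp μ (evEq Z 0 ∩ evEq W 1) (fun ω => Yo ω * (1 - D ω))) :
    cexp μ (CPset D1 D0) (fun ω => Y 0 0 ω)
      = -((r01 - ρ0 * prCond μ (NTset D1 D0) (evEq W 1))
        / prCond μ (CPset D1 D0) (evEq W 1)) := by
  have hS : ∀ z, z = 0 ∨ z = 1 → μ (evEq Z z ∩ evEq W 1) ≠ 0 := fun z hz h => by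
    simpa [pr, h] using hpos z hz
  have hSm : ∀ z, MeasurableSet (evEq Z z ∩ evEq W 1) := fun z =>
    (hZm (measurableSet_singleton z)).inter (hWm (measurableSet_singleton 1))
  have hstratum := fun z hz i j d z' => cexp_indicator_stratum_eq_prCond_mul (z := z)
    hD1m hD0m hZm hWm (hYint d z').aemeasurable (hCI1 d z' i j) (hCI2 1) (hS z hz)
  have hZ1 : cexp μ (evEq Z 1 ∩ evEq W 1) (fun ω => Yo ω * (1 - D ω))
      = prCond μ (NTset D1 D0) (evEq W 1) * cexp μ (NTset D1 D0) (Y 0 1) := by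
    refine (cexp_congr_ae (hSm 1) (hmono.mono fun ω hω hωS => ?_)).trans
      (hstratum 1 (Or.inr rfl) 0 0 0 1)
    exact untreated_outcome_of_instrument_eq_one (hD1v ω) (hD0v ω) hω hωS.1 (hD ω) (hYo ω)
  have hZ0 : cexp μ (evEq Z 0 ∩ evEq W 1) (fun ω => Yo ω * (1 - D ω))
      = prCond μ (NTset D1 D0) (evEq W 1) * cexp μ (NTset D1 D0) (Y 0 0)
        + prCond μ (CPset D1 D0) (evEq W 1) * cexp μ (CPset D1 D0) (Y 0 0) := by
    refine (cexp_congr_ae (hSm 0) (Filter.Eventually.of_forall fun ω hωS => ?_)).trans <|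
      (cexp_add _ ((hYint 0 0).indicator (measurableSet_stratum hD1m hD0m 0 0))
        ((hYint 0 0).indicator (measurableSet_stratum hD1m hD0m 1 0))).trans <|
      congrArg₂ (· + ·) (hstratum 0 (Or.inl rfl) 0 0 0 0) (hstratum 0 (Or.inl rfl) 1 0 0 0)
    exact untreated_outcome_of_instrument_eq_zero (hD1v ω) (hD0v ω) hωS.1 (hD ω) (hYo ω)
  rw [cexp_sub _ (hYint 0 1) (hYint 0 0)] at hρ0
  rw [hr01, hZ1, hZ0, ← hρ0]
  field_simp
  ring

/-- identification of `E[Y₀₀ | CP]`. -/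
theorem EY00_CP_identified
    {Ω : Type*} [MeasurableSpace Ω] (μ : Measure Ω) [IsProbabilityMeasure μ]
    (Y : Fin 2 → Fin 2 → Ω → ℝ) (D1 D0 Z W : Ω → ℝ)
    (hYint : ∀ d z, Integrable (Y d z) μ) (hYmeas : ∀ d z, Measurable (Y d z))
    (hD1v : ∀ ω, D1 ω = 0 ∨ D1 ω = 1) (hD0v : ∀ ω, D0 ω = 0 ∨ D0 ω = 1)
    (hZv : ∀ ω, Z ω = 0 ∨ Z ω = 1) (hWv : ∀ ω, W ω = 0 ∨ W ω = 1)
    (hD1m : Measurable D1) (hD0m : Measurable D0) (hZm : Measurable Z) (hWm : Measurable W)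
    (D : Ω → ℝ) (hD : ∀ ω, D ω = D1 ω * Z ω + D0 ω * (1 - Z ω))
    (Yo : Ω → ℝ)
    (hYo : ∀ ω, Yo ω = (Y 1 1 ω * Z ω + Y 1 0 ω * (1 - Z ω)) * D ω
      + (Y 0 1 ω * Z ω + Y 0 0 ω * (1 - Z ω)) * (1 - D ω))
    (hmono : ∀ᵐ ω ∂μ, D0 ω ≤ D1 ω)
    (hCI1 : ∀ (d z : Fin 2) (i j : ℝ),
      IndepFun (fun ω => (Z ω, W ω)) (Y d z) (μ[|{ω | D1 ω = i ∧ D0 ω = j}]))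
    (hCI2 : ∀ w' : ℝ, IndepFun Z (fun ω => (D1 ω, D0 ω)) (μ[|evEq W w']))
    (hpos : ∀ z : ℝ, z = 0 ∨ z = 1 → 0 < pr μ (evEq Z z ∩ evEq W 1))
    (hNT : 0 < pr μ (NTset D1 D0)) (hCP : 0 < pr μ (CPset D1 D0))
    (hCPW : 0 < prCond μ (CPset D1 D0) (evEq W 1))
    (ρ0 : ℝ) (hρ0 : cexp μ (NTset D1 D0) (fun ω => Y 0 1 ω - Y 0 0 ω) = ρ0)
    (r01 : ℝ)
    (hr01 : r01 = cexp μ (evEq Z 1 ∩ evEq W 1) (fun ω => Yo ω * (1 - D ω))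
      - cexp μ (evEq Z 0 ∩ evEq W 1) (fun ω => Yo ω * (1 - D ω))) :
    cexp μ (CPset D1 D0) (fun ω => Y 0 0 ω)
      = -((r01 - ρ0 * prCond μ (NTset D1 D0) (evEq W 1))
        / prCond μ (CPset D1 D0) (evEq W 1)) :=
  EY00_CP_identified_general μ Y D1 D0 Z W hYint hD1v hD0v hD1m hD0m hZm hWm D hD Yo hYo hmono hCI1
    hCI2 hpos hCPW ρ0 hρ0 r01 hr01
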